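/- arXiv:2204.12640 — 4 statements merged into one kernel-verified Lean document; each statement's English description precedes it below -/
import Mathlib

section
/- Zolotarev's identity: For every real-valued random variable X with E[|X|] < ∞, one has E[|X|] = (2/π) ∫₀^∞ (1 − Re E[e^{itX}])/t² dt. -/
/-!
Fubini–Tonelli for the nonnegative integrand `(1 - cos (t x)) / t²` reduces the identity to the
scalar formula `∫₀^∞ (1 - cos (a t)) / t² dt = π |a| / 2`, and by scaling to `a = 1`.
For that, write `1 / t² = ∫₀^∞ s e^{-st} ds` and integrate in `t` first: the Laplace transform
gives `∫₀^∞ (1 - cos t) s e^{-st} dt = 1 / (1 + s²)`, whose integral over `(0, ∞)` is `π / 2`.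
-/

open MeasureTheory Real Set

lemma one_sub_cos_nonneg (t : ℝ) : 0 ≤ 1 - cos t := sub_nonneg.mpr (cos_le_one t)

lemma integral_mul_exp_neg_mul_Ioi {r : ℝ} (hr : 0 < r) :
    ∫ s in Ioi (0 : ℝ), s * exp (-(r * s)) = 1 / r ^ 2 := by
  simpa [Gamma_two, show (2 : ℝ) - 1 = 1 by norm_num] using
    integral_rpow_mul_exp_neg_mul_Ioi two_pos hr

lemma one_sub_cos_mul_exp_neg_eq_re (s t : ℝ) :
    (1 - cos t) * exp (-(s * t)) =
      (Complex.exp (-s * t) - Complex.exp ((-s + Complex.I) * t)).re := by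
  simp [Complex.exp_re, sub_mul, mul_comm]

lemma integrableOn_one_sub_cos_mul_exp_neg_mul {s : ℝ} (hs : 0 < s) :
    IntegrableOn (fun t => (1 - cos t) * exp (-(s * t))) (Ioi 0) := by
  simp_rw [one_sub_cos_mul_exp_neg_eq_re]
  exact ((integrableOn_exp_mul_complex_Ioi (by simpa using hs) 0).sub
    (integrableOn_exp_mul_complex_Ioi (by simpa using hs) 0)).re

lemma integral_one_sub_cos_mul_exp_neg_mul {s : ℝ} (hs : 0 < s) :
    ∫ t in Ioi (0 : ℝ), (1 - cos t) * exp (-(s * t)) = 1 / (s * (s ^ 2 + 1)) := by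
  have h₁ := integrableOn_exp_mul_complex_Ioi (a := -s) (by simpa using hs) 0
  have h₂ := integrableOn_exp_mul_complex_Ioi (a := -s + Complex.I) (by simpa using hs) 0
  have h : IntegrableOn (fun t : ℝ => Complex.exp (-s * t) - Complex.exp ((-s + Complex.I) * t))
      (Ioi 0) := h₁.sub h₂
  simp_rw [one_sub_cos_mul_exp_neg_eq_re, ← RCLike.re_to_complex]
  rw [integral_re h, integral_sub h₁ h₂, integral_exp_mul_complex_Ioi (by simpa using hs),
    integral_exp_mul_complex_Ioi (by simpa using hs)]
  simp only [RCLike.re_to_complex, Complex.ofReal_zero, mul_zero, Complex.exp_zero,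
    Complex.sub_re, Complex.div_re, Complex.normSq_apply, Complex.neg_re, Complex.neg_im,
    Complex.add_re, Complex.add_im, Complex.ofReal_re, Complex.ofReal_im, Complex.I_re,
    Complex.I_im, Complex.one_re, Complex.one_im]
  field_simp
  ring

lemma integral_one_sub_cos_mul_mul_exp_neg_mul {s : ℝ} (hs : 0 < s) :
    ∫ t in Ioi (0 : ℝ), (1 - cos t) * (s * exp (-(s * t))) = (1 + s ^ 2)⁻¹ := by
  simp_rw [mul_left_comm _ s]
  rw [integral_const_mul, integral_one_sub_cos_mul_exp_neg_mul hs]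
  field_simp
  ring

lemma one_sub_cos_div_sq_eq_integral {t : ℝ} (ht : 0 < t) :
    (1 - cos t) / t ^ 2 = ∫ s in Ioi (0 : ℝ), (1 - cos t) * (s * exp (-(s * t))) := by
  simp_rw [mul_comm _ t]
  rw [integral_const_mul, integral_mul_exp_neg_mul_Ioi ht, mul_one_div]

lemma integrable_one_sub_cos_mul_mul_exp_neg_mul :
    Integrable (Function.uncurry fun t s => (1 - cos t) * (s * exp (-(s * t))))
      ((volume.restrict (Ioi 0)).prod (volume.restrict (Ioi 0))) := by
  refine (integrable_prod_iff' (by fun_prop)).mpr ⟨?_, ?_⟩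
  · filter_upwards [ae_restrict_mem measurableSet_Ioi] with s hs
    simpa only [Function.uncurry_apply_pair, mul_left_comm _ s] using
      (integrableOn_one_sub_cos_mul_exp_neg_mul hs).const_mul s
  · refine (integrable_inv_one_add_sq.restrict (s := Ioi 0)).congr ?_
    filter_upwards [ae_restrict_mem measurableSet_Ioi] with s (hs : 0 < s)
    rw [← integral_one_sub_cos_mul_mul_exp_neg_mul hs]
    refine setIntegral_congr_fun measurableSet_Ioi fun t _ => ?_
    simp only [Function.uncurry_apply_pair]
    exact (norm_of_nonneg (by have := one_sub_cos_nonneg t; positivity)).symm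

lemma integrableOn_one_sub_cos_div_sq : IntegrableOn (fun t => (1 - cos t) / t ^ 2) (Ioi 0) := by
  refine integrable_one_sub_cos_mul_mul_exp_neg_mul.integral_prod_left.congr ?_
  filter_upwards [ae_restrict_mem measurableSet_Ioi] with t ht
  exact (one_sub_cos_div_sq_eq_integral ht).symm

lemma integral_one_sub_cos_div_sq : ∫ t in Ioi (0 : ℝ), (1 - cos t) / t ^ 2 = π / 2 := calc
  ∫ t in Ioi (0 : ℝ), (1 - cos t) / t ^ 2
    = ∫ t in Ioi (0 : ℝ), ∫ s in Ioi (0 : ℝ), (1 - cos t) * (s * exp (-(s * t))) :=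
      setIntegral_congr_fun measurableSet_Ioi fun _ ht => one_sub_cos_div_sq_eq_integral ht
  _ = ∫ s in Ioi (0 : ℝ), ∫ t in Ioi (0 : ℝ), (1 - cos t) * (s * exp (-(s * t))) :=
      integral_integral_swap integrable_one_sub_cos_mul_mul_exp_neg_mul
  _ = ∫ s in Ioi (0 : ℝ), (1 + s ^ 2)⁻¹ :=
      setIntegral_congr_fun measurableSet_Ioi fun _ hs =>
        integral_one_sub_cos_mul_mul_exp_neg_mul hs
  _ = π / 2 := by simp [integral_Ioi_inv_one_add_sq]

lemma one_sub_cos_mul_div_sq_eq {a : ℝ} (ha : a ≠ 0) :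
    (fun t => (1 - cos (a * t)) / t ^ 2) =
      fun t => |a| ^ 2 * ((1 - cos (|a| * t)) / (|a| * t) ^ 2) := by
  have hcos (t : ℝ) : cos (a * t) = cos (|a| * t) := by
    rcases abs_choice a with h | h <;> simp [h]
  ext t
  rw [hcos, mul_pow, ← div_div, mul_div_assoc', mul_div_cancel₀ _ (by positivity)]

lemma integrableOn_one_sub_cos_mul_div_sq (a : ℝ) :
    IntegrableOn (fun t => (1 - cos (a * t)) / t ^ 2) (Ioi 0) := by
  rcases eq_or_ne a 0 with rfl | ha
  · simp
  rw [one_sub_cos_mul_div_sq_eq ha]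
  refine Integrable.const_mul ?_ _
  refine (integrableOn_Ioi_comp_mul_left_iff (fun u => (1 - cos u) / u ^ 2) 0
    (abs_pos.mpr ha)).mpr ?_
  simpa using integrableOn_one_sub_cos_div_sq

lemma integral_one_sub_cos_mul_div_sq (a : ℝ) :
    ∫ t in Ioi (0 : ℝ), (1 - cos (a * t)) / t ^ 2 = π / 2 * |a| := by
  rcases eq_or_ne a 0 with rfl | ha
  · simp
  rw [one_sub_cos_mul_div_sq_eq ha, integral_const_mul,
    integral_comp_mul_left_Ioi (fun u => (1 - cos u) / u ^ 2) 0 (abs_pos.mpr ha), mul_zero,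
    integral_one_sub_cos_div_sq, smul_eq_mul]
  field_simp

lemma re_charFun_eq_integral_cos (μ : Measure ℝ) [IsFiniteMeasure μ] (t : ℝ) :
    (charFun μ t).re = ∫ x, cos (t * x) ∂μ := by
  rw [charFun_apply_real, ← RCLike.re_to_complex, ← integral_re]
  · congr with x
    norm_cast
    exact Complex.exp_ofReal_mul_I_re (t * x)
  · refine Integrable.of_bound (by fun_prop) 1 (ae_of_all _ fun x => ?_)
    rw [← Complex.ofReal_mul, Complex.norm_exp_ofReal_mul_I]

theorem integral_one_sub_re_charFun_div_sq (μ : Measure ℝ) [IsProbabilityMeasure μ]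
    (hμ : Integrable (fun x => x) μ) :
    ∫ t in Ioi (0 : ℝ), (1 - (charFun μ t).re) / t ^ 2 = π / 2 * ∫ x, |x| ∂μ := by
  have hcos (t : ℝ) : Integrable (fun x => cos (t * x)) μ :=
    Integrable.of_bound (by fun_prop) 1 (ae_of_all _ fun x => by simpa using abs_cos_le_one _)
  have hpoint (t : ℝ) :
      (1 - (charFun μ t).re) / t ^ 2 = ∫ x, (1 - cos (x * t)) / t ^ 2 ∂μ := by
    simp_rw [re_charFun_eq_integral_cos, integral_div, mul_comm _ t]
    rw [integral_sub (integrable_const 1) (hcos t)]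
    simp
  have hint : Integrable (Function.uncurry fun t x => (1 - cos (x * t)) / t ^ 2)
      ((volume.restrict (Ioi 0)).prod μ) := by
    refine (integrable_prod_iff' (by fun_prop : Measurable _).aestronglyMeasurable).mpr
      ⟨ae_of_all _ integrableOn_one_sub_cos_mul_div_sq, (hμ.abs.const_mul (π / 2)).congr ?_⟩
    refine ae_of_all _ fun x => ?_
    change π / 2 * |x| = ∫ t in Ioi 0, ‖(1 - cos (x * t)) / t ^ 2‖
    rw [← integral_one_sub_cos_mul_div_sq]
    refine integral_congr_ae (ae_of_all _ fun t => ?_)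
    exact (norm_of_nonneg (div_nonneg (one_sub_cos_nonneg _) (sq_nonneg t))).symm
  simp_rw [hpoint, integral_integral_swap hint, integral_one_sub_cos_mul_div_sq,
    integral_const_mul]

/-- **Zolotarev's identity**: for any real-valued random variable `X` with `E[|X|] < ∞`,
`E[|X|] = (2/π) ∫₀^∞ (1 - Re E[e^{itX}]) / t² dt`. -/
theorem zolotarev_identity {Ω : Type*} [MeasurableSpace Ω] (μ : Measure Ω)
    [IsProbabilityMeasure μ]
    (X : Ω → ℝ) (hX : Integrable X μ) :
    ∫ ω, |X ω| ∂μ =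
      (2 / Real.pi) * ∫ t in Set.Ioi (0 : ℝ),
        (1 - (∫ ω, Complex.exp (Complex.I * (t : ℂ) * (X ω : ℂ)) ∂μ).re) / t ^ 2 := by
  have hXm : AEMeasurable X μ := hX.aemeasurable
  have := Measure.isProbabilityMeasure_map hXm
  have hcharFun (t : ℝ) :
      ∫ ω, Complex.exp (Complex.I * t * X ω) ∂μ = charFun (μ.map X) t := by
    rw [charFun_apply_real, integral_map hXm (by fun_prop)]
    simp_rw [mul_comm Complex.I, mul_right_comm _ Complex.I]
  have habs : ∫ ω, |X ω| ∂μ = ∫ x, |x| ∂μ.map X :=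
    (integral_map hXm continuous_abs.aestronglyMeasurable).symm
  simp_rw [hcharFun]
  rw [integral_one_sub_re_charFun_div_sq _ ((integrable_map_measure (by fun_prop) hXm).mpr hX),
    habs]
  field_simp
end

section
/- Let p, q ∈ [0, 1/4] and t ∈ [0, π]. Then |θ_p(t) − θ_q(t)| ≥ |p − q|·sin t, where θ_p(t) := arcsin(p·sin t / r_p(t)) is the argument of the complex number 1 − p + p·e^{it}. -/
/-- The modulus of the complex number `1 - p + p·e^{it}`. -/
noncomputable def rMod (p t : ℝ) : ℝ :=
  Real.sqrt ((1 - p * (1 - Real.cos t)) ^ 2 + p ^ 2 * Real.sin t ^ 2)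

/-- The argument of the complex number `1 - p + p·e^{it}` (for `t ∈ [0, π]`). -/
noncomputable def thetaArg (p t : ℝ) : ℝ :=
  Real.arcsin (p * Real.sin t / rMod p t)

lemma rMod_sq (p t : ℝ) : rMod p t ^ 2 = 1 - 2 * p * (1 - Real.cos t) * (1 - p) := by
  have hsc := Real.sin_sq_add_cos_sq t
  rw [rMod, Real.sq_sqrt (by positivity)]
  linear_combination p ^ 2 * hsc

lemma rMod_lb (p t : ℝ) (hp0 : 0 ≤ p) (hp1 : p ≤ 1/4) : (1:ℝ)/2 ≤ rMod p t := by
  have hc2 : -1 ≤ Real.cos t := Real.neg_one_le_cos t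
  have h1 : p * (1 - Real.cos t) ≤ 1/2 := by nlinarith
  rw [rMod, show (1:ℝ)/2 = Real.sqrt ((1/2)^2) by rw [Real.sqrt_sq]; norm_num]
  apply Real.sqrt_le_sqrt
  nlinarith [sq_nonneg (p * Real.sin t)]

lemma rMod_ub (p t : ℝ) (hp0 : 0 ≤ p) (hp1 : p ≤ 1/4) : rMod p t ≤ 1 := by
  have hc1 : Real.cos t ≤ 1 := Real.cos_le_one t
  have hr2 := rMod_sq p t
  have hlb := rMod_lb p t hp0 hp1
  have hnn : 0 ≤ 2 * p * (1 - Real.cos t) * (1 - p) := by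
    apply mul_nonneg (mul_nonneg (by linarith) (by linarith)); linarith
  nlinarith [sq_nonneg (rMod p t - 1)]

set_option maxHeartbeats 1000000 in
lemma key_lemma (p q t : ℝ) (hp : p ∈ Set.Icc (0 : ℝ) (1/4)) (hq : q ∈ Set.Icc (0 : ℝ) (1/4))
    (ht : t ∈ Set.Icc (0 : ℝ) Real.pi) (hpq : q ≤ p) :
    thetaArg p t - thetaArg q t ≥ (p - q) * Real.sin t := by
  obtain ⟨hp0, hp1⟩ := hp
  obtain ⟨hq0, hq1⟩ := hq
  have hs : 0 ≤ Real.sin t := Real.sin_nonneg_of_nonneg_of_le_pi ht.1 ht.2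
  have hs1 : Real.sin t ≤ 1 := Real.sin_le_one t
  have hc1 : Real.cos t ≤ 1 := Real.cos_le_one t
  have hc2 : -1 ≤ Real.cos t := Real.neg_one_le_cos t
  have hrp2 := rMod_sq p t
  have hrq2 := rMod_sq q t
  have hrp_lb := rMod_lb p t hp0 hp1
  have hrq_lb := rMod_lb q t hq0 hq1
  have hrp_ub := rMod_ub p t hp0 hp1
  have hrq_ub := rMod_ub q t hq0 hq1
  have hrp_pos : 0 < rMod p t := by linarith
  have hrq_pos : 0 < rMod q t := by linarith
  -- r_p ≤ r_q
  have hr2le : rMod p t ^ 2 ≤ rMod q t ^ 2 := by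
    rw [hrp2, hrq2]
    nlinarith [mul_nonneg (mul_nonneg (by linarith : (0:ℝ) ≤ 1 - Real.cos t)
      (by linarith : (0:ℝ) ≤ p - q)) (by linarith : (0:ℝ) ≤ 1 - p - q)]
  have hrpq : rMod p t ≤ rMod q t := by nlinarith [hr2le]
  -- arcsin argument bounds
  have hxps : p * Real.sin t ≤ 1/4 := by nlinarith
  have hyqs : q * Real.sin t ≤ 1/4 := by nlinarith
  have hx0 : 0 ≤ p * Real.sin t / rMod p t := by positivity
  have hy0 : 0 ≤ q * Real.sin t / rMod q t := by positivity
  have hx1 : p * Real.sin t / rMod p t ≤ 1 := by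
    rw [div_le_one hrp_pos]; linarith
  have hy1 : q * Real.sin t / rMod q t ≤ 1 := by
    rw [div_le_one hrq_pos]; linarith
  -- comparison of fractions
  have e1 : q * rMod p t ≤ p * rMod q t :=
    mul_le_mul hpq hrpq hrp_pos.le hp0
  have e3 : q * rMod p t * (1 - rMod q t) ≤ p * rMod q t * (1 - rMod p t) :=
    mul_le_mul e1 (by linarith) (by linarith)
      (mul_nonneg hp0 hrq_pos.le)
  have e4 : 0 ≤ Real.sin t * (p * rMod q t * (1 - rMod p t) - q * rMod p t * (1 - rMod q t)) :=
    mul_nonneg hs (by linarith)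
  have hyx : q * Real.sin t / rMod q t ≤ p * Real.sin t / rMod p t := by
    rw [div_le_div_iff₀ hrq_pos hrp_pos]
    nlinarith [mul_le_mul_of_nonneg_left e1 hs]
  have hkey : p * Real.sin t / rMod p t - q * Real.sin t / rMod q t ≥ (p - q) * Real.sin t := by
    rw [div_sub_div _ _ hrp_pos.ne' hrq_pos.ne', ge_iff_le,
      le_div_iff₀ (mul_pos hrp_pos hrq_pos)]
    nlinarith [e4]
  -- arcsin inequality via sin_sub_sin
  set u := Real.arcsin (p * Real.sin t / rMod p t) with hu
  set v := Real.arcsin (q * Real.sin t / rMod q t) with hv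
  have hmono : v ≤ u := Real.monotone_arcsin hyx
  have hu2 : u ≤ Real.pi / 2 := Real.arcsin_le_pi_div_two _
  have hv2 : -(Real.pi / 2) ≤ v := Real.neg_pi_div_two_le_arcsin _
  have hd0 : 0 ≤ (u - v) / 2 := by linarith
  have hsin_nn : 0 ≤ Real.sin ((u - v) / 2) :=
    Real.sin_nonneg_of_nonneg_of_le_pi hd0 (by linarith [Real.pi_pos])
  have hsle : Real.sin ((u - v) / 2) ≤ (u - v) / 2 := Real.sin_le hd0
  have hcos : Real.cos ((u + v) / 2) ≤ 1 := Real.cos_le_one ((u + v) / 2)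
  have hsinu : Real.sin u = p * Real.sin t / rMod p t :=
    Real.sin_arcsin (by linarith) hx1
  have hsinv : Real.sin v = q * Real.sin t / rMod q t :=
    Real.sin_arcsin (by linarith) hy1
  have hssub : Real.sin u - Real.sin v = 2 * Real.sin ((u - v) / 2) * Real.cos ((u + v) / 2) :=
    Real.sin_sub_sin u v
  rw [hsinu, hsinv] at hssub
  have harc : u - v ≥ p * Real.sin t / rMod p t - q * Real.sin t / rMod q t := by
    nlinarith [hsle, hcos, hsin_nn, hssub]
  show u - v ≥ (p - q) * Real.sin t
  linarith

theorem stmt_thm (p q t : ℝ) (hp : p ∈ Set.Icc (0 : ℝ) (1/4)) (hq : q ∈ Set.Icc (0 : ℝ) (1/4))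
    (ht : t ∈ Set.Icc (0 : ℝ) Real.pi) :
    |thetaArg p t - thetaArg q t| ≥ |p - q| * Real.sin t := by
  rcases le_total q p with h | h
  · have hkey := key_lemma p q t hp hq ht h
    rw [abs_of_nonneg (sub_nonneg.2 h)]
    calc |thetaArg p t - thetaArg q t| ≥ thetaArg p t - thetaArg q t := le_abs_self _
      _ ≥ (p - q) * Real.sin t := hkey
  · have hkey := key_lemma q p t hq hp ht h
    rw [abs_of_nonpos (sub_nonpos.2 h), abs_sub_comm]
    calc |thetaArg q t - thetaArg p t| ≥ thetaArg q t - thetaArg p t := le_abs_self _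
      _ ≥ (q - p) * Real.sin t := hkey
      _ = -(p - q) * Real.sin t := by ring
end

section
/- Let p, q ∈ [0, 1/4] and let n ≥ 16 be a natural number with n(p+q) ≤ 1/2. Suppose X, X' ~ Bin(n,p) and Y, Y' ~ Bin(n,q) are mutually independent. Then Δ := E[|X−Y| + |X'−Y'| − |X−X'| − |Y−Y'|] ≥ (1/8)·n²(p−q)². -/
open MeasureTheory ProbabilityTheory

/-- The binomial distribution `Bin(n, p)`, as a measure on `ℝ` supported on `{0, 1, …, n}`. -/
noncomputable def binomialMeasure (n : ℕ) (p : ℝ) : Measure ℝ :=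
  ∑ k ∈ Finset.range (n + 1),
    ENNReal.ofReal ((n.choose k : ℝ) * p ^ k * (1 - p) ^ (n - k)) • Measure.dirac (k : ℝ)

/-!
For independent `A`, `B` with values in `{0, …, n}` one has `min A B = ∑_{t<n} 1{A>t} 1{B>t}`, hence
`E[min A B] = ∑_{t<n} P(A>t) P(B>t)`. With `|a - b| = a + b - 2 min a b` this turns `Δ` into
`2 ∑_{t<n} (P(X>t) - P(Y>t))²`. Keeping only the term `t = 0` leaves `2 ((1-q)^n - (1-p)^n)²`,
and for `q ≤ p`, `(1-q)^n - (1-p)^n ≥ n (p-q) (1-p)^(n-1) ≥ n (p-q) / 2` because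
`(1-p)^(n-1) ≥ 1 - np ≥ 1/2`.
-/

open Finset

lemma abs_sub_eq_add_sub_two_mul_min (a b : ℝ) : |a - b| = a + b - 2 * min a b := by
  rw [← max_sub_min_eq_abs']; linarith [min_add_max a b]

lemma mul_sub_mul_pow_le_pow_sub_pow {R : Type*} [CommRing R] [LinearOrder R]
    [IsStrictOrderedRing R] {a b : R} (hb : 0 ≤ b) (hba : b ≤ a) (n : ℕ) :
    n * (a - b) * b ^ (n - 1) ≤ a ^ n - b ^ n := by
  calc n * (a - b) * b ^ (n - 1) = (∑ _i ∈ range n, b ^ (n - 1)) * (a - b) := by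
        rw [sum_const, card_range, nsmul_eq_mul]; ring
    _ ≤ (∑ i ∈ range n, a ^ i * b ^ (n - 1 - i)) * (a - b) := by
        gcongr (∑ i ∈ range n, ?_) * _ with i hi
        calc b ^ (n - 1) = b ^ i * b ^ (n - 1 - i) := by
              rw [← pow_add]; congr 1; have := mem_range.1 hi; omega
          _ ≤ a ^ i * b ^ (n - 1 - i) := by gcongr
    _ = a ^ n - b ^ n := geom_sum₂_mul a b n

lemma mul_sub_div_two_le_one_sub_pow_sub_one_sub_pow {p q : ℝ} (hq : 0 ≤ q) (hqp : q ≤ p)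
    (hp : p ≤ 1) {n : ℕ} (hnp : n * p ≤ 1 / 2) :
    n * (p - q) / 2 ≤ (1 - q) ^ n - (1 - p) ^ n := by
  have hbernoulli : 1 / 2 ≤ (1 - p) ^ (n - 1) := calc
    (1 / 2 : ℝ) ≤ 1 + n * -p := by linarith
    _ ≤ (1 - p) ^ n := by
      simpa [sub_eq_add_neg] using one_add_mul_le_pow (a := -p) (by linarith) n
    _ ≤ (1 - p) ^ (n - 1) := pow_le_pow_of_le_one (by linarith) (by linarith) (Nat.sub_le n 1)
  calc n * (p - q) / 2 ≤ n * ((1 - q) - (1 - p)) * (1 - p) ^ (n - 1) := by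
        rw [sub_sub_sub_cancel_left]
        have : 0 ≤ (n : ℝ) * (p - q) := mul_nonneg n.cast_nonneg (by linarith)
        nlinarith
    _ ≤ (1 - q) ^ n - (1 - p) ^ n := mul_sub_mul_pow_le_pow_sub_pow (by linarith) (by linarith) n

lemma sq_mul_sub_div_two_le_sq_one_sub_pow_sub {p q : ℝ} (hp : 0 ≤ p) (hq : 0 ≤ q)
    (hp1 : p ≤ 1) (hq1 : q ≤ 1) {n : ℕ} (hnp : n * p ≤ 1 / 2) (hnq : n * q ≤ 1 / 2) :
    (n * (p - q) / 2) ^ 2 ≤ ((1 - q) ^ n - (1 - p) ^ n) ^ 2 := by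
  wlog hqp : q ≤ p generalizing p q
  · convert this hq hp hq1 hp1 hnq hnp (le_of_not_ge hqp) using 1 <;> ring
  exact pow_le_pow_left₀ (div_nonneg (mul_nonneg n.cast_nonneg (sub_nonneg.2 hqp)) zero_le_two)
    (mul_sub_div_two_le_one_sub_pow_sub_one_sub_pow hq hqp hp1 hnp) 2

section Binomial

variable (n : ℕ) (p : ℝ)

lemma binomialMeasure_apply (s : Set ℝ) :
    binomialMeasure n p s = ∑ k ∈ range (n + 1),
      ENNReal.ofReal (n.choose k * p ^ k * (1 - p) ^ (n - k)) * s.indicator 1 (k : ℝ) := by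
  simp [binomialMeasure, Measure.dirac_apply]

lemma ae_binomialMeasure : ∀ᵐ x ∂binomialMeasure n p, ∃ k : ℕ, k ≤ n ∧ x = (k : ℝ) := by
  rw [ae_iff, binomialMeasure_apply]
  refine sum_eq_zero fun k hk => ?_
  have : k ≤ n := Nat.lt_succ_iff.mp (mem_range.mp hk)
  simp [this]

variable {p}

lemma binomialMeasure_real_Ioi_zero (hp0 : 0 ≤ p) (hp1 : p ≤ 1) :
    (binomialMeasure n p).real (Set.Ioi 0) = 1 - (1 - p) ^ n := by
  set w : ℕ → ℝ := fun k => n.choose k * p ^ k * (1 - p) ^ (n - k)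
  have hw : ∀ k, 0 ≤ w k := fun k => by
    have := sub_nonneg.2 hp1
    positivity
  have hbinom : ∑ k ∈ range n, w (k + 1) + w 0 = 1 := by
    have := (add_pow p (1 - p) n).symm
    rw [add_sub_cancel, one_pow] at this
    rw [← sum_range_succ' w, ← this]
    exact sum_congr rfl fun k _ => by ring
  have hw0 : w 0 = (1 - p) ^ n := by simp [w]
  have hpos : ∀ k : ℕ, ((k + 1 : ℕ) : ℝ) ∈ Set.Ioi 0 := fun k => Set.mem_Ioi.2 (by positivity)
  rw [measureReal_def, binomialMeasure_apply, sum_range_succ']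
  simp only [Set.indicator_of_mem (hpos _), Pi.one_apply, mul_one, Nat.cast_zero,
    Set.indicator_of_notMem (Set.notMem_Ioi.2 le_rfl), mul_zero, add_zero]
  rw [← ENNReal.ofReal_sum_of_nonneg fun k _ => hw _,
    ENNReal.toReal_ofReal (sum_nonneg fun k _ => hw _)]
  linarith

end Binomial

lemma sq_one_sub_pow_sub_le_sum_sq_binomialMeasure_tail {p q : ℝ} (hp : 0 ≤ p) (hq : 0 ≤ q)
    (hp1 : p ≤ 1) (hq1 : q ≤ 1) (n : ℕ) :
    ((1 - q) ^ n - (1 - p) ^ n) ^ 2 ≤ ∑ t ∈ range n,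
      ((binomialMeasure n p).real (Set.Ioi t) - (binomialMeasure n q).real (Set.Ioi t)) ^ 2 := by
  cases n with
  | zero => simp
  | succ m =>
    rw [sum_range_succ', Nat.cast_zero, binomialMeasure_real_Ioi_zero _ hp hp1,
      binomialMeasure_real_Ioi_zero _ hq hq1, sub_sub_sub_cancel_left]
    exact le_add_of_nonneg_left (sum_nonneg fun _ _ => sq_nonneg _)

section TailSum

variable {Ω : Type*} [MeasurableSpace Ω] {μ : Measure Ω} {n : ℕ} {A B : Ω → ℝ}

lemma min_ae_eq_sum_indicator (hA : ∀ᵐ ω ∂μ, ∃ k : ℕ, k ≤ n ∧ A ω = k)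
    (hB : ∀ᵐ ω ∂μ, ∃ k : ℕ, k ≤ n ∧ B ω = k) :
    (fun ω => min (A ω) (B ω)) =ᵐ[μ]
      fun ω => ∑ t ∈ range n, (A ⁻¹' Set.Ioi (t : ℝ) ∩ B ⁻¹' Set.Ioi (t : ℝ)).indicator 1 ω := by
  filter_upwards [hA, hB] with ω ⟨k, hk, hAk⟩ ⟨l, hl, hBl⟩
  have hfilter : (range n).filter (· < min k l) = range (min k l) := by
    ext t; simp only [mem_filter, mem_range]; omega
  classical
  simp only [Set.indicator_apply, Set.mem_inter_iff, Set.mem_preimage, Set.mem_Ioi, hAk, hBl,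
    Nat.cast_lt, ← lt_min_iff, Pi.one_apply, sum_boole, hfilter, card_range, Nat.cast_min]

variable [IsFiniteMeasure μ] (hAm : Measurable A) (hBm : Measurable B)
  (hA : ∀ᵐ ω ∂μ, ∃ k : ℕ, k ≤ n ∧ A ω = k) (hB : ∀ᵐ ω ∂μ, ∃ k : ℕ, k ≤ n ∧ B ω = k)
include hAm hBm hA hB

lemma integrable_min : Integrable (fun ω => min (A ω) (B ω)) μ :=
  (integrable_finsetSum _ fun _ _ => (integrable_const 1).indicator
    ((hAm measurableSet_Ioi).inter (hBm measurableSet_Ioi))).congr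
    (min_ae_eq_sum_indicator hA hB).symm

lemma integral_min_eq_sum_mul (hAB : IndepFun A B μ) :
    ∫ ω, min (A ω) (B ω) ∂μ =
      ∑ t ∈ range n, μ.real (A ⁻¹' Set.Ioi (t : ℝ)) * μ.real (B ⁻¹' Set.Ioi (t : ℝ)) := by
  have hmeas (t : ℕ) : MeasurableSet (A ⁻¹' Set.Ioi (t : ℝ) ∩ B ⁻¹' Set.Ioi (t : ℝ)) :=
    (hAm measurableSet_Ioi).inter (hBm measurableSet_Ioi)
  rw [integral_congr_ae (min_ae_eq_sum_indicator hA hB),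
    integral_finsetSum _ fun t _ => (integrable_const 1).indicator (hmeas t)]
  refine sum_congr rfl fun t _ => ?_
  rw [integral_indicator_one (hmeas t), measureReal_def,
    hAB.measure_inter_preimage_eq_mul _ _ measurableSet_Ioi measurableSet_Ioi, ENNReal.toReal_mul]
  rfl

end TailSum

section Energy

variable {Ω : Type*} [MeasurableSpace Ω] {μ : Measure Ω} [IsFiniteMeasure μ] {n : ℕ}

theorem integral_energyDistance_eq_two_mul_sum_sq {ν ν' : Measure ℝ}
    (hν : ∀ᵐ x ∂ν, ∃ k : ℕ, k ≤ n ∧ x = (k : ℝ))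
    (hν' : ∀ᵐ x ∂ν', ∃ k : ℕ, k ≤ n ∧ x = (k : ℝ))
    {X X' Y Y' : Ω → ℝ} (hXm : Measurable X) (hX'm : Measurable X') (hYm : Measurable Y)
    (hY'm : Measurable Y') (hXX' : IndepFun X X' μ) (hYY' : IndepFun Y Y' μ)
    (hXY : IndepFun X Y μ) (hX'Y' : IndepFun X' Y' μ)
    (hX : μ.map X = ν) (hX' : μ.map X' = ν) (hY : μ.map Y = ν') (hY' : μ.map Y' = ν') :
    ∫ ω, (|X ω - Y ω| + |X' ω - Y' ω| - |X ω - X' ω| - |Y ω - Y' ω|) ∂μ =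
      2 * ∑ t ∈ range n, (ν.real (Set.Ioi t) - ν'.real (Set.Ioi t)) ^ 2 := by
  have hsupp {Z : Ω → ℝ} {ρ : Measure ℝ} (hZm : Measurable Z) (hZ : μ.map Z = ρ)
      (hρ : ∀ᵐ x ∂ρ, ∃ k : ℕ, k ≤ n ∧ x = (k : ℝ)) : ∀ᵐ ω ∂μ, ∃ k : ℕ, k ≤ n ∧ Z ω = k :=
    ae_of_ae_map hZm.aemeasurable (hZ ▸ hρ)
  have htail {Z : Ω → ℝ} {ρ : Measure ℝ} (hZm : Measurable Z) (hZ : μ.map Z = ρ) (t : ℕ) :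
      μ.real (Z ⁻¹' Set.Ioi (t : ℝ)) = ρ.real (Set.Ioi t) := by
    rw [← hZ, map_measureReal_apply hZm measurableSet_Ioi]
  have hXn := hsupp hXm hX hν
  have hX'n := hsupp hX'm hX' hν
  have hYn := hsupp hYm hY hν'
  have hY'n := hsupp hY'm hY' hν'
  have hpointwise : (fun ω => |X ω - Y ω| + |X' ω - Y' ω| - |X ω - X' ω| - |Y ω - Y' ω|) =
      fun ω => 2 * (min (X ω) (X' ω) + min (Y ω) (Y' ω)
        - min (X ω) (Y ω) - min (X' ω) (Y' ω)) := by
    funext ω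
    simp only [abs_sub_eq_add_sub_two_mul_min]
    ring
  have iXX' := integrable_min hXm hX'm hXn hX'n
  have iYY' := integrable_min hYm hY'm hYn hY'n
  have iXY := integrable_min hXm hYm hXn hYn
  have iX'Y' := integrable_min hX'm hY'm hX'n hY'n
  rw [hpointwise, integral_const_mul, integral_sub (by exact (iXX'.add iYY').sub iXY) iX'Y',
    integral_sub (by exact iXX'.add iYY') iXY, integral_add iXX' iYY',
    integral_min_eq_sum_mul hXm hX'm hXn hX'n hXX',
    integral_min_eq_sum_mul hYm hY'm hYn hY'n hYY',
    integral_min_eq_sum_mul hXm hYm hXn hYn hXY,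
    integral_min_eq_sum_mul hX'm hY'm hX'n hY'n hX'Y']
  simp only [htail hXm hX, htail hX'm hX', htail hYm hY, htail hY'm hY', ← sum_add_distrib,
    ← sum_sub_distrib]
  congr 1
  exact sum_congr rfl fun _ _ => by ring

end Energy

theorem binomial_expectation_gap_case_general {Ω : Type*} [MeasurableSpace Ω] (μ : Measure Ω)
    [IsProbabilityMeasure μ]
    (p q : ℝ) (hp : p ∈ Set.Icc (0 : ℝ) (1/4)) (hq : q ∈ Set.Icc (0 : ℝ) (1/4))
    (n : ℕ)
    (hsum : (n : ℝ) * (p + q) ≤ 1/2)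
    (X X' Y Y' : Ω → ℝ)
    (hXm : Measurable X) (hX'm : Measurable X') (hYm : Measurable Y) (hY'm : Measurable Y')
    (hindep : iIndepFun ![X, X', Y, Y'] μ)
    (hX : Measure.map X μ = binomialMeasure n p)
    (hX' : Measure.map X' μ = binomialMeasure n p)
    (hY : Measure.map Y μ = binomialMeasure n q)
    (hY' : Measure.map Y' μ = binomialMeasure n q) :
    ∫ ω, (|X ω - Y ω| + |X' ω - Y' ω| - |X ω - X' ω| - |Y ω - Y' ω|) ∂μ ≥
      (1/8) * n ^ 2 * (p - q) ^ 2 := by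
  obtain ⟨hp0, hp4⟩ := hp
  obtain ⟨hq0, hq4⟩ := hq
  rw [integral_energyDistance_eq_two_mul_sum_sq (ae_binomialMeasure n p) (ae_binomialMeasure n q)
    hXm hX'm hYm hY'm (hindep.indepFun (by decide : (0 : Fin 4) ≠ 1))
    (hindep.indepFun (by decide : (2 : Fin 4) ≠ 3))
    (hindep.indepFun (by decide : (0 : Fin 4) ≠ 2))
    (hindep.indepFun (by decide : (1 : Fin 4) ≠ 3)) hX hX' hY hY']
  have hp1 : p ≤ 1 := by linarith
  have hq1 : q ≤ 1 := by linarith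
  have hnp : n * p ≤ 1 / 2 := by nlinarith [mul_nonneg n.cast_nonneg hq0]
  have hnq : n * q ≤ 1 / 2 := by nlinarith [mul_nonneg n.cast_nonneg hp0]
  calc (1 / 8) * n ^ 2 * (p - q) ^ 2 ≤ 2 * (n * (p - q) / 2) ^ 2 := by
        nlinarith [sq_nonneg ((n : ℝ) * (p - q))]
    _ ≤ 2 * ((1 - q) ^ n - (1 - p) ^ n) ^ 2 := by
        linarith [sq_mul_sub_div_two_le_sq_one_sub_pow_sub hp0 hq0 hp1 hq1 hnp hnq]
    _ ≤ _ := by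
        linarith [sq_one_sub_pow_sub_le_sum_sq_binomialMeasure_tail hp0 hq0 hp1 hq1 n]

theorem binomial_expectation_gap_case {Ω : Type*} [MeasurableSpace Ω] (μ : Measure Ω)
    [IsProbabilityMeasure μ]
    (p q : ℝ) (hp : p ∈ Set.Icc (0 : ℝ) (1/4)) (hq : q ∈ Set.Icc (0 : ℝ) (1/4))
    (n : ℕ) (hn : 16 ≤ n)
    (hsum : (n : ℝ) * (p + q) ≤ 1/2)
    (X X' Y Y' : Ω → ℝ)
    (hXm : Measurable X) (hX'm : Measurable X') (hYm : Measurable Y) (hY'm : Measurable Y')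
    (hindep : iIndepFun ![X, X', Y, Y'] μ)
    (hX : Measure.map X μ = binomialMeasure n p)
    (hX' : Measure.map X' μ = binomialMeasure n p)
    (hY : Measure.map Y μ = binomialMeasure n q)
    (hY' : Measure.map Y' μ = binomialMeasure n q) :
    ∫ ω, (|X ω - Y ω| + |X' ω - Y' ω| - |X ω - X' ω| - |Y ω - Y' ω|) ∂μ ≥
      (1/8) * n ^ 2 * (p - q) ^ 2 :=
  binomial_expectation_gap_case_general μ p q hp hq n hsum X X' Y Y' hXm hX'm hYm hY'm hindep hX hX'
    hY hY'
end

section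
/- Let k ≥ 1 and n ≥ 1 be natural numbers, let ε ∈ (0,1], and let p, q be probability distributions on {1,…,k} (i.e., p_i, q_i ≥ 0 with ∑_i p_i = ∑_i q_i = 1) satisfying ∑_{i=1}^k |p_i − q_i| > 2ε. Then (1/n) ∑_{i=1}^k min( (1/8)·n|p_i−q_i|, (1/16)·n²(p_i−q_i)², (1/40)·n²(p_i−q_i)²/√(n(p_i+q_i)) ) ≥ (1/12)·min( ε, (ε²/3)·(n/k), (ε²/11)·√(n/k) ). -/
/-- Pointwise bound: the per-element triple min dominates a simpler two-way min. -/
lemma egslb_pointwise (N a b : ℝ) (hN : 1 ≤ N) (ha : 0 ≤ a) (hb : 0 ≤ b) :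
    min (N * |a - b| / 8)
      ((N ^ 2 / 40) * (|a - b| ^ 2 / max (2/5) (Real.sqrt (N * (a + b))))) ≤
    min ((1/8) * N * |a - b|)
      (min ((1/16) * N ^ 2 * (a - b) ^ 2)
        ((1/40) * N ^ 2 * (a - b) ^ 2 / Real.sqrt (N * (a + b)))) := by
  have hd0 : 0 ≤ |a - b| := abs_nonneg _
  have hsq : (a - b) ^ 2 = |a - b| ^ 2 := (sq_abs _).symm
  rw [hsq]
  set d := |a - b| with hd
  set v := Real.sqrt (N * (a + b)) with hv
  have hv0 : 0 ≤ v := Real.sqrt_nonneg _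
  have hu25 : (2/5 : ℝ) ≤ max (2/5) v := le_max_left _ _
  have hu0 : (0:ℝ) < max (2/5) v := by linarith
  refine min_le_min (by ring_nf; exact le_rfl) (le_min ?_ ?_)
  · -- ≤ (1/16) N² d²
    have h1 : d ^ 2 / max (2/5) v ≤ d ^ 2 / (2/5) := by
      gcongr
    nlinarith [sq_nonneg (N * d), sq_nonneg N]
  · -- ≤ (1/40) N² d² / v
    by_cases hdz : d = 0
    · simp [hdz]
    · have hdpos : 0 < d := lt_of_le_of_ne hd0 (Ne.symm hdz)
      have hds : d ≤ a + b := by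
        rw [hd]
        calc |a - b| ≤ |a| + |b| := abs_sub _ _
        _ = a + b := by rw [abs_of_nonneg ha, abs_of_nonneg hb]
      have hspos : 0 < a + b := lt_of_lt_of_le hdpos hds
      have hvpos : 0 < v := Real.sqrt_pos.2 (by positivity)
      have hvu : v ≤ max (2/5) v := le_max_right _ _
      have key : N ^ 2 * d ^ 2 / (max (2/5) v) ≤ N ^ 2 * d ^ 2 / v := by
        gcongr
      calc (N ^ 2 / 40) * (d ^ 2 / max (2/5) v) = (N ^ 2 * d ^ 2 / max (2/5) v) / 40 := by
            ring
      _ ≤ (N ^ 2 * d ^ 2 / v) / 40 := by linarith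
      _ = (1/40) * N ^ 2 * d ^ 2 / v := by ring

set_option maxHeartbeats 2000000 in
/-- Expectation-gap arithmetic: if `p, q` are probability distributions on `{1,…,k}` with
`∑ᵢ |pᵢ − qᵢ| > 2ε`, then the per-element minimum bounds sum to the stated global gap. -/
theorem expectation_gap_sum_lower_bound (k n : ℕ) (hk : 1 ≤ k) (hn : 1 ≤ n)
    (ε : ℝ) (hε₀ : 0 < ε) (hε₁ : ε ≤ 1)
    (p q : Fin k → ℝ) (hp : ∀ i, 0 ≤ p i) (hq : ∀ i, 0 ≤ q i)
    (hps : ∑ i, p i = 1) (hqs : ∑ i, q i = 1)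
    (hdist : ∑ i, |p i - q i| > 2 * ε) :
    (1 / n : ℝ) * ∑ i, min ((1/8) * n * |p i - q i|)
        (min ((1/16) * n ^ 2 * (p i - q i) ^ 2)
          ((1/40) * n ^ 2 * (p i - q i) ^ 2 / Real.sqrt (n * (p i + q i)))) ≥
      (1/12) * min ε (min ((ε ^ 2 / 3) * (n / k)) ((ε ^ 2 / 11) * Real.sqrt (n / k))) := by
  classical
  have hN1 : (1:ℝ) ≤ (n:ℝ) := by exact_mod_cast hn
  have hK1 : (1:ℝ) ≤ (k:ℝ) := by exact_mod_cast hk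
  set N : ℝ := (n:ℝ) with hNdef
  set K : ℝ := (k:ℝ) with hKdef
  have hN0 : (0:ℝ) < N := by linarith
  have hK0 : (0:ℝ) < K := by linarith
  set d : Fin k → ℝ := fun i => |p i - q i| with hdDef
  set u : Fin k → ℝ := fun i => max (2/5) (Real.sqrt (N * (p i + q i))) with huDef
  have hd0 : ∀ i, 0 ≤ d i := fun i => abs_nonneg _
  have hu25 : ∀ i, (2/5:ℝ) ≤ u i := fun i => le_max_left _ _
  have hu0 : ∀ i, (0:ℝ) < u i := fun i => lt_of_lt_of_le (by norm_num) (hu25 i)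
  set G : Fin k → ℝ := fun i => min (N * d i / 8) ((N ^ 2 / 40) * (d i ^ 2 / u i)) with hGdef
  have hG0 : ∀ i, 0 ≤ G i := by
    intro i
    apply le_min
    · positivity
    · have := (hu0 i).le
      positivity
  have key : ∀ i, G i ≤ min ((1/8) * N * |p i - q i|)
      (min ((1/16) * N ^ 2 * (p i - q i) ^ 2)
        ((1/40) * N ^ 2 * (p i - q i) ^ 2 / Real.sqrt (N * (p i + q i)))) :=
    fun i => egslb_pointwise N (p i) (q i) hN1 (hp i) (hq i)
  have step1 : ∑ i, G i ≤ ∑ i, min ((1/8) * N * |p i - q i|)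
      (min ((1/16) * N ^ 2 * (p i - q i) ^ 2)
        ((1/40) * N ^ 2 * (p i - q i) ^ 2 / Real.sqrt (N * (p i + q i)))) :=
    Finset.sum_le_sum (fun i _ => key i)
  set R : ℝ := (1/12) * min ε (min ((ε ^ 2 / 3) * (N / K)) ((ε ^ 2 / 11) * Real.sqrt (N / K)))
    with hRdef
  suffices hsuff : R * N ≤ ∑ i, G i by
    rw [ge_iff_le]
    calc R = (R * N) * (1 / N) := by field_simp
    _ ≤ (∑ i, G i) * (1 / N) := by
        apply mul_le_mul_of_nonneg_right hsuff (by positivity)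
    _ ≤ (∑ i, min ((1/8) * N * |p i - q i|)
          (min ((1/16) * N ^ 2 * (p i - q i) ^ 2)
            ((1/40) * N ^ 2 * (p i - q i) ^ 2 / Real.sqrt (N * (p i + q i))))) * (1 / N) := by
        apply mul_le_mul_of_nonneg_right step1 (by positivity)
    _ = 1 / N * ∑ i, min ((1/8) * N * |p i - q i|)
          (min ((1/16) * N ^ 2 * (p i - q i) ^ 2)
            ((1/40) * N ^ 2 * (p i - q i) ^ 2 / Real.sqrt (N * (p i + q i)))) := by ring
  -- split indices
  set S1 : Finset (Fin k) := Finset.univ.filter (fun i => 5 * u i ≤ N * d i) with hS1def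
  set S2 : Finset (Fin k) := Finset.univ.filter (fun i => ¬ (5 * u i ≤ N * d i)) with hS2def
  have hsplitG : ∑ i, G i = ∑ i ∈ S1, G i + ∑ i ∈ S2, G i :=
    (Finset.sum_filter_add_sum_filter_not _ _ _).symm
  have hsplitd : ∑ i ∈ S1, d i + ∑ i ∈ S2, d i = ∑ i, d i :=
    Finset.sum_filter_add_sum_filter_not _ _ _
  have hG1 : ∀ i ∈ S1, N * d i / 8 ≤ G i := by
    intro i hi
    have hcond : 5 * u i ≤ N * d i := by
      have := Finset.mem_filter.mp hi
      simpa [hS1def] using this.2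
    refine le_min le_rfl ?_
    have heq : (N ^ 2 / 40) * (d i ^ 2 / u i) = (N ^ 2 * d i ^ 2) / (40 * u i) := by
      field_simp
    rw [heq, div_le_div_iff₀ (by norm_num) (by positivity)]
    nlinarith [mul_nonneg (sub_nonneg.2 hcond) (mul_nonneg hN0.le (hd0 i)), hu0 i]
  have hG2 : ∀ i ∈ S2, (N ^ 2 / 40) * (d i ^ 2 / u i) ≤ G i := by
    intro i hi
    have hcond : N * d i ≤ 5 * u i := by
      have := Finset.mem_filter.mp hi
      have h2 : ¬ (5 * u i ≤ N * d i) := by simpa [hS2def] using this.2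
      linarith [lt_of_not_ge h2]
    refine le_min ?_ le_rfl
    have heq : (N ^ 2 / 40) * (d i ^ 2 / u i) = (N ^ 2 * d i ^ 2) / (40 * u i) := by
      field_simp
    rw [heq, div_le_div_iff₀ (by positivity) (by norm_num)]
    nlinarith [mul_nonneg (sub_nonneg.2 hcond) (mul_nonneg hN0.le (hd0 i)), hu0 i]
  have hdsum : 2 * ε < ∑ i, d i := hdist
  have hcases : ε ≤ ∑ i ∈ S1, d i ∨ ε ≤ ∑ i ∈ S2, d i := by
    by_contra hcon
    push_neg at hcon
    linarith [hcon.1, hcon.2]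
  -- bound on R by each component
  have hRε : R ≤ ε / 12 := by
    rw [hRdef]
    have := min_le_left ε (min ((ε ^ 2 / 3) * (N / K)) ((ε ^ 2 / 11) * Real.sqrt (N / K)))
    linarith
  rcases hcases with hD1 | hD2
  · -- Case A : mass on S1
    have hsum1 : N * ε / 8 ≤ ∑ i ∈ S1, G i := by
      calc N * ε / 8 = (N / 8) * ε := by ring
      _ ≤ (N / 8) * ∑ i ∈ S1, d i := by
          apply mul_le_mul_of_nonneg_left hD1 (by positivity)
      _ = ∑ i ∈ S1, N * d i / 8 := by rw [Finset.mul_sum]; congr 1; ext i; ring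
      _ ≤ ∑ i ∈ S1, G i := Finset.sum_le_sum hG1
    have hsum2 : (0:ℝ) ≤ ∑ i ∈ S2, G i := Finset.sum_nonneg (fun i _ => hG0 i)
    have : R * N ≤ (ε / 12) * N := by
      apply mul_le_mul_of_nonneg_right hRε hN0.le
    calc R * N ≤ (ε / 12) * N := this
    _ ≤ N * ε / 8 := by nlinarith
    _ ≤ ∑ i, G i := by rw [hsplitG]; linarith
  · -- Case B : mass on S2, use Cauchy–Schwarz
    obtain ⟨U, hUdef⟩ : ∃ U : ℝ, U = ∑ i ∈ S2, u i := ⟨_, rfl⟩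
    have hS2ne : S2.Nonempty := by
      apply Finset.nonempty_of_sum_ne_zero (f := d)
      intro hzero
      rw [hzero] at hD2
      exact absurd hD2 (not_le.mpr hε₀)
    have hU0 : (0:ℝ) < U := by
      obtain ⟨i0, hi0⟩ := hS2ne
      have h1 : (2/5:ℝ) ≤ u i0 := hu25 i0
      have h2 : u i0 ≤ U := by
        rw [hUdef]
        exact Finset.single_le_sum (fun i _ => (hu0 i).le) hi0
      exact lt_of_lt_of_le (by norm_num : (0:ℝ) < 2/5) (le_trans h1 h2)
    have hCS : (∑ i ∈ S2, d i) ^ 2 / U ≤ ∑ i ∈ S2, d i ^ 2 / u i := by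
      rw [hUdef]
      exact Finset.sq_sum_div_le_sum_sq_div S2 d (fun i _ => hu0 i)
    have hεsq : ε ^ 2 / U ≤ ∑ i ∈ S2, d i ^ 2 / u i := by
      refine le_trans ?_ hCS
      gcongr
    have hsumG2 : (N ^ 2 / 40) * (ε ^ 2 / U) ≤ ∑ i ∈ S2, G i := by
      calc (N ^ 2 / 40) * (ε ^ 2 / U) ≤ (N ^ 2 / 40) * ∑ i ∈ S2, d i ^ 2 / u i := by
            apply mul_le_mul_of_nonneg_left hεsq (by positivity)
      _ = ∑ i ∈ S2, (N ^ 2 / 40) * (d i ^ 2 / u i) := by rw [Finset.mul_sum]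
      _ ≤ ∑ i ∈ S2, G i := Finset.sum_le_sum hG2
    have hsumG1 : (0:ℝ) ≤ ∑ i ∈ S1, G i := Finset.sum_nonneg (fun i _ => hG0 i)
    -- Bound U
    have hsqrtNs : ∀ i, Real.sqrt (N * (p i + q i)) ^ 2 = N * (p i + q i) := by
      intro i
      exact Real.sq_sqrt (mul_nonneg hN0.le (add_nonneg (hp i) (hq i)))
    have hsumsqrt : ∑ i, Real.sqrt (N * (p i + q i)) ≤ Real.sqrt (2 * N * K) := by
      have hcs2 := Finset.sum_mul_sq_le_sq_mul_sq Finset.univ (fun _ => (1:ℝ))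
        (fun i => Real.sqrt (N * (p i + q i)))
      simp only [one_mul, one_pow] at hcs2
      have hsum1 : ∑ _i : Fin k, (1:ℝ) = K := by
        rw [Finset.sum_const, Finset.card_univ, Fintype.card_fin]
        simp [hKdef]
      have hsums : ∑ i, Real.sqrt (N * (p i + q i)) ^ 2 = 2 * N := by
        have : ∀ i, Real.sqrt (N * (p i + q i)) ^ 2 = N * p i + N * q i := by
          intro i; rw [hsqrtNs i]; ring
        rw [Finset.sum_congr rfl (fun i _ => this i), Finset.sum_add_distrib,
          ← Finset.mul_sum, ← Finset.mul_sum, hps, hqs]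
        ring
      rw [hsum1, hsums] at hcs2
      have hnn : 0 ≤ ∑ i, Real.sqrt (N * (p i + q i)) :=
        Finset.sum_nonneg (fun i _ => Real.sqrt_nonneg _)
      have h2NK : Real.sqrt (2 * N * K) ^ 2 = 2 * N * K := Real.sq_sqrt (by positivity)
      nlinarith [Real.sqrt_nonneg (2 * N * K)]
    have hUbound : U ≤ 2 * K / 5 + Real.sqrt (2 * N * K) := by
      rw [hUdef]
      have h1 : ∑ i ∈ S2, u i ≤ ∑ i, u i := by
        apply Finset.sum_le_sum_of_subset_of_nonneg (Finset.filter_subset _ _)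
        intro i _ _
        exact (hu0 i).le
      have h2 : ∑ i, u i ≤ ∑ i, (2/5 + Real.sqrt (N * (p i + q i))) := by
        apply Finset.sum_le_sum
        intro i _
        exact max_le (by linarith [Real.sqrt_nonneg (N * (p i + q i))])
          (by linarith [Real.sqrt_nonneg (N * (p i + q i))])
      have h3 : ∑ i, ((2:ℝ)/5 + Real.sqrt (N * (p i + q i)))
          = 2 * K / 5 + ∑ i, Real.sqrt (N * (p i + q i)) := by
        rw [Finset.sum_add_distrib, Finset.sum_const, Finset.card_univ, Fintype.card_fin]
        simp [hKdef]
        ring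
      rw [h3] at h2
      linarith
    -- final arithmetic, two regimes
    have hfinal : R * N ≤ (N ^ 2 / 40) * (ε ^ 2 / U) := by
      rcases le_or_gt (121 * N) (9 * K) with hreg | hreg
      · -- regime (i): R ≤ ε²N/(36K), U ≤ 9K/10
        have hsq2 : Real.sqrt (2 * N * K) ≤ K / 2 := by
          have h8 : 8 * N ≤ K := by linarith
          have : 2 * N * K ≤ (K / 2) ^ 2 := by nlinarith
          calc Real.sqrt (2 * N * K) ≤ Real.sqrt ((K / 2) ^ 2) := Real.sqrt_le_sqrt this
          _ = K / 2 := Real.sqrt_sq (by positivity)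
        have hU9 : U ≤ 9 * K / 10 := by linarith
        have hR2 : R ≤ ε ^ 2 * N / (36 * K) := by
          rw [hRdef]
          have h1 := min_le_right ε (min ((ε ^ 2 / 3) * (N / K)) ((ε ^ 2 / 11) * Real.sqrt (N / K)))
          have h2 := min_le_left ((ε ^ 2 / 3) * (N / K)) ((ε ^ 2 / 11) * Real.sqrt (N / K))
          have h3 : (1/12 : ℝ) * min ε (min ((ε ^ 2 / 3) * (N / K)) ((ε ^ 2 / 11) * Real.sqrt (N / K)))
              ≤ (1/12) * ((ε ^ 2 / 3) * (N / K)) := by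
            apply mul_le_mul_of_nonneg_left (le_trans h1 h2) (by norm_num)
          calc (1/12 : ℝ) * min ε (min ((ε ^ 2 / 3) * (N / K)) ((ε ^ 2 / 11) * Real.sqrt (N / K)))
              ≤ (1/12) * ((ε ^ 2 / 3) * (N / K)) := h3
          _ = ε ^ 2 * N / (36 * K) := by field_simp; ring
        calc R * N ≤ (ε ^ 2 * N / (36 * K)) * N := by
              apply mul_le_mul_of_nonneg_right hR2 hN0.le
        _ ≤ (N ^ 2 / 40) * (ε ^ 2 / U) := by
              rw [div_mul_eq_mul_div, div_le_iff₀ (by positivity)]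
              have expand : N ^ 2 / 40 * (ε ^ 2 / U) * (36 * K) = (36 * K * N ^ 2 * ε ^ 2) / (40 * U) := by
                field_simp
              rw [expand, le_div_iff₀ (by positivity)]
              have hh : 40 * ε ^ 2 * N ^ 2 * U ≤ 40 * ε ^ 2 * N ^ 2 * (9 * K / 10) :=
                mul_le_mul_of_nonneg_left hU9 (by positivity)
              nlinarith [hh]
      · -- regime (ii): R ≤ ε²√(N/K)/(132·...), U ≤ (89/30)√(NK)
        set W : ℝ := Real.sqrt (N * K) with hWdef
        have hW2 : W ^ 2 = N * K := Real.sq_sqrt (by positivity)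
        have hW0 : 0 < W := Real.sqrt_pos.2 (by positivity)
        have hsqrtNK : Real.sqrt (N / K) = W / K := by
          rw [hWdef, Real.sqrt_div hN0.le, Real.sqrt_mul hN0.le]
          rw [div_eq_div_iff (ne_of_gt (Real.sqrt_pos.2 hK0)) (ne_of_gt hK0), mul_assoc,
            Real.mul_self_sqrt hK0.le]
        have hKW : 3 * K ≤ 11 * W := by
          have h1 : (3 * K) ^ 2 ≤ (11 * W) ^ 2 := by nlinarith
          nlinarith
        have hsq2 : Real.sqrt (2 * N * K) ≤ (3/2) * W := by
          have : 2 * N * K ≤ ((3/2) * W) ^ 2 := by nlinarith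
          calc Real.sqrt (2 * N * K) ≤ Real.sqrt (((3/2) * W) ^ 2) := Real.sqrt_le_sqrt this
          _ = (3/2) * W := Real.sqrt_sq (by positivity)
        have hUW : U ≤ (89/30) * W := by
          have : 2 * K / 5 ≤ (22/15) * W := by linarith
          linarith
        have hR3 : R ≤ ε ^ 2 * W / (132 * K) := by
          rw [hRdef]
          have h1 := min_le_right ε (min ((ε ^ 2 / 3) * (N / K)) ((ε ^ 2 / 11) * Real.sqrt (N / K)))
          have h2 := min_le_right ((ε ^ 2 / 3) * (N / K)) ((ε ^ 2 / 11) * Real.sqrt (N / K))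
          have h3 : (1/12 : ℝ) * min ε (min ((ε ^ 2 / 3) * (N / K)) ((ε ^ 2 / 11) * Real.sqrt (N / K)))
              ≤ (1/12) * ((ε ^ 2 / 11) * Real.sqrt (N / K)) := by
            apply mul_le_mul_of_nonneg_left (le_trans h1 h2) (by norm_num)
          calc (1/12 : ℝ) * min ε (min ((ε ^ 2 / 3) * (N / K)) ((ε ^ 2 / 11) * Real.sqrt (N / K)))
              ≤ (1/12) * ((ε ^ 2 / 11) * Real.sqrt (N / K)) := h3
          _ = ε ^ 2 * W / (132 * K) := by rw [hsqrtNK]; field_simp; ring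
        calc R * N ≤ (ε ^ 2 * W / (132 * K)) * N := by
              apply mul_le_mul_of_nonneg_right hR3 hN0.le
        _ ≤ (N ^ 2 / 40) * (ε ^ 2 / U) := by
              rw [div_mul_eq_mul_div, div_le_iff₀ (by positivity)]
              have expand : N ^ 2 / 40 * (ε ^ 2 / U) * (132 * K) = (132 * K * N ^ 2 * ε ^ 2) / (40 * U) := by
                field_simp
              rw [expand, le_div_iff₀ (by positivity)]
              have hh1 : 40 * ε ^ 2 * N * W * U ≤ 40 * ε ^ 2 * N * W * ((89/30) * W) :=
                mul_le_mul_of_nonneg_left hUW (by positivity)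
              have hh2 : ε ^ 2 * N * W ^ 2 = ε ^ 2 * N * (N * K) := by rw [hW2]
              have hh3 : (0:ℝ) ≤ ε ^ 2 * N ^ 2 * K := by positivity
              nlinarith [hh1, hh2, hh3]
    rw [hsplitG]
    linarith
end
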